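/- arXiv:math/0202226 — 2 statements merged into one kernel-verified Lean document; each statement's English description precedes it below -/
import Mathlib

section
/- Let G be a finite directed graph with a distinguished vertex v₁, and let G' be obtained from G by bisecting an edge e, i.e., replacing a directed edge (a,b) by a new vertex v together with edges (a,v) and (v,b), where v ≠ v₁. Then the number of arborescences of G' rooted at v₁ equals the number of arborescences of G rooted at v₁. -/
/-- A directed multigraph with edge set `E` over vertex set `V`. -/
structure Digraph' (V E : Type*) where
  src : E → V
  tgt : E → V

/-- `T` is an arborescence of `G` rooted at `r`: every vertex other than the root has
exactly one outgoing edge in `T`, the root has none, and following the edges of `T`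
from any vertex leads to `r` (a spanning tree all of whose edges point towards `r`). -/
def Digraph'.IsArb {V E : Type*} (G : Digraph' V E) (r : V) (T : Set E) : Prop :=
  (∀ v, v ≠ r → ∃! e, e ∈ T ∧ G.src e = v) ∧
  (∀ e ∈ T, G.src e ≠ r) ∧
  (∀ v, Relation.ReflTransGen (fun a b => ∃ e ∈ T, G.src e = a ∧ G.tgt e = b) v r)

/-- The graph obtained from `G` by bisecting the directed edge `e₀ = (a, b)`:
`none : Option V` is the new vertex `v`, the old edge `e₀` now runs from `a` to `v`,
and the new edge `none : Option E` runs from `v` to `b`. -/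
def Digraph'.bisect {V E : Type*} [DecidableEq E] (G : Digraph' V E) (e₀ : E) :
    Digraph' (Option V) (Option E) where
  src := fun e => e.elim none (fun e' => some (G.src e'))
  tgt := fun e => e.elim (some (G.tgt e₀))
    (fun e' => if e' = e₀ then none else some (G.tgt e'))

section aux
variable {V E : Type*} [DecidableEq E] (G : Digraph' V E) (e₀ : E) (v₁ : V)

lemma bisect_src_some (e : E) : (G.bisect e₀).src (some e) = some (G.src e) := rfl
lemma bisect_src_none : (G.bisect e₀).src none = none := rfl
lemma bisect_tgt_none : (G.bisect e₀).tgt none = some (G.tgt e₀) := rfl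
lemma bisect_tgt_some (e : E) :
    (G.bisect e₀).tgt (some e) = if e = e₀ then none else some (G.tgt e) := rfl

lemma fwd {T : Set E} (h : G.IsArb v₁ T) :
    (G.bisect e₀).IsArb (some v₁) (insert none (some '' T)) := by
  obtain ⟨h1, h2, h3⟩ := h
  set T' : Set (Option E) := insert none (some '' T) with hT'
  have key : ∀ x y : V, (∃ e ∈ T, G.src e = x ∧ G.tgt e = y) →
      Relation.ReflTransGen
        (fun a b => ∃ e ∈ T', (G.bisect e₀).src e = a ∧ (G.bisect e₀).tgt e = b)
        (some x) (some y) := by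
    rintro x y ⟨e, heT, hs, ht⟩
    by_cases he : e = e₀
    · subst he
      refine Relation.ReflTransGen.head (b := none) ?_ (Relation.ReflTransGen.single ?_)
      · exact ⟨some e, Or.inr ⟨e, heT, rfl⟩, by simp [bisect_src_some, hs],
          by simp [bisect_tgt_some]⟩
      · exact ⟨none, Or.inl rfl, rfl, by simp [bisect_tgt_none, ht]⟩
    · exact Relation.ReflTransGen.single ⟨some e, Or.inr ⟨e, heT, rfl⟩,
        by simp [bisect_src_some, hs], by simp [bisect_tgt_some, he, ht]⟩
  have lift : ∀ v : V, Relation.ReflTransGen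
      (fun a b => ∃ e ∈ T', (G.bisect e₀).src e = a ∧ (G.bisect e₀).tgt e = b)
      (some v) (some v₁) := by
    intro v
    exact Relation.ReflTransGen.lift' (r := fun a b => ∃ e ∈ T, G.src e = a ∧ G.tgt e = b)
      some key _ _ (h3 v)
  refine ⟨?_, ?_, ?_⟩
  · rintro (_ | v) hv
    · refine ⟨none, ⟨Or.inl rfl, rfl⟩, ?_⟩
      rintro (_ | e) ⟨_, hs⟩
      · rfl
      · simp [bisect_src_some] at hs
    · obtain ⟨e, ⟨heT, hs⟩, hu⟩ := h1 v (by simpa using hv)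
      refine ⟨some e, ⟨Or.inr ⟨e, heT, rfl⟩, by simp [bisect_src_some, hs]⟩, ?_⟩
      rintro (_ | e') ⟨hmem, hsrc⟩
      · simp [bisect_src_none] at hsrc
      · have : e' ∈ T := by
          rcases hmem with h | ⟨x, hx, hxe⟩
          · simp at h
          · simp_all
        simp only [bisect_src_some, Option.some.injEq] at hsrc
        exact congrArg some (hu e' ⟨this, hsrc⟩)
  · rintro (_ | e) hmem
    · simp [bisect_src_none]
    · have : e ∈ T := by
        rcases hmem with h | ⟨x, hx, hxe⟩
        · simp at h
        · simp_all
      simp [bisect_src_some, h2 e this]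
  · rintro (_ | v)
    · refine Relation.ReflTransGen.head ?_ (lift (G.tgt e₀))
      exact ⟨none, Or.inl rfl, rfl, rfl⟩
    · exact lift v

lemma none_mem {T' : Set (Option E)} (h : (G.bisect e₀).IsArb (some v₁) T') :
    none ∈ T' := by
  obtain ⟨e, ⟨heT, hs⟩, _⟩ := h.1 none (by simp)
  cases e with
  | none => exact heT
  | some e => simp [bisect_src_some] at hs

lemma bwd {T' : Set (Option E)} (h : (G.bisect e₀).IsArb (some v₁) T') :
    G.IsArb v₁ {e | some e ∈ T'} := by
  obtain ⟨h1, h2, h3⟩ := h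
  refine ⟨?_, ?_, ?_⟩
  · intro v hv
    obtain ⟨e, ⟨heT, hs⟩, hu⟩ := h1 (some v) (by simpa using hv)
    cases e with
    | none => simp [bisect_src_none] at hs
    | some e =>
      simp only [bisect_src_some, Option.some.injEq] at hs
      refine ⟨e, ⟨heT, hs⟩, ?_⟩
      intro y ⟨hyT, hys⟩
      have := hu (some y) ⟨hyT, by simp [bisect_src_some, hys]⟩
      simpa using this
  · intro e heT
    have := h2 (some e) heT
    simpa [bisect_src_some] using this
  · intro v
    have := h3 (some v)
    have step : ∀ a b : Option V,
        (∃ e ∈ T', (G.bisect e₀).src e = a ∧ (G.bisect e₀).tgt e = b) →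
        Relation.ReflTransGen
          (fun x y => ∃ e ∈ {e | some e ∈ T'}, G.src e = x ∧ G.tgt e = y)
          (a.elim (G.tgt e₀) id) (b.elim (G.tgt e₀) id) := by
      rintro a b ⟨e, heT, hs, ht⟩
      cases e with
      | none =>
        rw [bisect_src_none] at hs; rw [bisect_tgt_none] at ht
        subst hs; subst ht
        exact Relation.ReflTransGen.refl
      | some e =>
        rw [bisect_src_some] at hs
        rw [bisect_tgt_some] at ht
        subst hs
        by_cases he : e = e₀
        · simp only [he, if_pos rfl] at ht
          subst ht; subst he
          exact Relation.ReflTransGen.single ⟨e, heT, rfl, rfl⟩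
        · simp only [if_neg he] at ht
          subst ht
          exact Relation.ReflTransGen.single ⟨e, heT, rfl, rfl⟩
    have lifted : Relation.ReflTransGen
        (fun x y => ∃ e ∈ {e | some e ∈ T'}, G.src e = x ∧ G.tgt e = y)
        ((some v : Option V).elim (G.tgt e₀) id) ((some v₁ : Option V).elim (G.tgt e₀) id) :=
      Relation.ReflTransGen.lift' (fun a : Option V => a.elim (G.tgt e₀) id) step _ _ this
    simpa using lifted

end aux


/-- Bisecting an edge (inserting a new valence-2 vertex `v ≠ v₁`) does not change the
number of arborescences rooted at `v₁`. -/
theorem bisect_card_arborescence {V E : Type*} [Fintype V] [Fintype E] [DecidableEq E]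
    (G : Digraph' V E) (e₀ : E) (v₁ : V) :
    Nat.card {T : Set (Option E) // (G.bisect e₀).IsArb (some v₁) T} =
      Nat.card {T : Set E // G.IsArb v₁ T} := by
  apply Nat.card_congr
  refine ⟨fun T' => ⟨{e | some e ∈ T'.1}, bwd G e₀ v₁ T'.2⟩,
    fun T => ⟨insert none (some '' T.1), fwd G e₀ v₁ T.2⟩, ?_, ?_⟩
  · rintro ⟨T', hT'⟩
    have hn := none_mem G e₀ v₁ hT'
    ext e
    cases e with
    | none => simpa using hn
    | some e => simp
  · rintro ⟨T, hT⟩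
    ext e
    simp
end

section
/- Let G be a finite connected graph that is a 'join of chains' (a bouquet of circles: every block is a cycle, i.e., every edge lies on exactly one cycle and the cycles are attached at cut vertices in a tree pattern). Orient each cycle consistently (canonical orientation). Then G has exactly one arborescence rooted at any fixed vertex. -/
namespace JoinCycAux

def lev {V : Type*} (R : V → V → Prop) (r : V) : ℕ → Set V
  | 0 => {r}
  | n+1 => lev R r n ∪ {v | ∃ w, R v w ∧ w ∈ lev R r n}

theorem lev_zero {V : Type*} (R : V → V → Prop) (r : V) : lev R r 0 = {r} := rfl

theorem lev_succ {V : Type*} (R : V → V → Prop) (r : V) (n : ℕ) :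
    lev R r (n+1) = lev R r n ∪ {v | ∃ w, R v w ∧ w ∈ lev R r n} := rfl

theorem mem_lev_of_reach {V : Type*} {R : V → V → Prop} {r v : V}
    (h : Relation.ReflTransGen R v r) : ∃ n, v ∈ lev R r n := by
  induction h using Relation.ReflTransGen.head_induction_on with
  | refl => exact ⟨0, rfl⟩
  | head hstep _ ih =>
      obtain ⟨n, hn⟩ := ih
      exact ⟨n+1, Or.inr ⟨_, hstep, hn⟩⟩

theorem exists_arb {V E : Type*} (G : Digraph' V E) (r : V)
    (hreach : ∀ v, Relation.ReflTransGen (fun a b => ∃ e, G.src e = a ∧ G.tgt e = b) v r) :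
    ∃ T, G.IsArb r T := by
  classical
  have hmem : ∀ v, ∃ n, v ∈ lev (fun a b => ∃ e, G.src e = a ∧ G.tgt e = b) r n :=
    fun v => mem_lev_of_reach (hreach v)
  set d : V → ℕ := fun v => Nat.find (hmem v) with hd
  have key : ∀ v : {v : V // v ≠ r}, ∃ e, G.src e = v.1 ∧ d (G.tgt e) < d v.1 := by
    rintro ⟨v, hv⟩
    show ∃ e, G.src e = v ∧ d (G.tgt e) < d v
    have h1 : v ∈ lev (fun a b => ∃ e, G.src e = a ∧ G.tgt e = b) r (d v) :=
      Nat.find_spec (hmem v)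
    have h0 : d v ≠ 0 := by
      intro h
      rw [h, lev_zero] at h1
      exact hv h1
    obtain ⟨n, hn⟩ := Nat.exists_eq_succ_of_ne_zero h0
    rw [hn, lev_succ] at h1
    rcases h1 with h1 | ⟨w, ⟨e, hes, het⟩, hw⟩
    · exact absurd h1 (Nat.find_min (hmem v) (show n < d v by omega))
    · refine ⟨e, hes, ?_⟩
      have h2 : d (G.tgt e) ≤ n := Nat.find_min' (hmem _) (by rw [het]; exact hw)
      omega
  choose F hF1 hF2 using key
  refine ⟨Set.range F, ?_, ?_, ?_⟩
  · intro v hv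
    refine ⟨F ⟨v, hv⟩, ⟨⟨⟨v, hv⟩, rfl⟩, hF1 _⟩, ?_⟩
    rintro e ⟨⟨⟨w, hw⟩, rfl⟩, hsrc⟩
    have hwv : w = v := (hF1 ⟨w, hw⟩).symm.trans hsrc
    exact congrArg F (Subtype.ext hwv)
  · rintro e ⟨⟨w, hw⟩, rfl⟩
    rw [hF1]; exact hw
  · intro v
    have main : ∀ n v, d v ≤ n →
        Relation.ReflTransGen (fun a b => ∃ e ∈ Set.range F, G.src e = a ∧ G.tgt e = b) v r := by
      intro n
      induction n with
      | zero =>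
          intro v hv0
          have h1 : v ∈ lev (fun a b => ∃ e, G.src e = a ∧ G.tgt e = b) r (d v) :=
            Nat.find_spec (hmem v)
          have : d v = 0 := Nat.le_zero.mp hv0
          rw [this, lev_zero] at h1
          rw [h1]
      | succ n ih =>
          intro v hvn
          by_cases hvr : v = r
          · rw [hvr]
          · refine Relation.ReflTransGen.head
              ⟨F ⟨v, hvr⟩, ⟨⟨v, hvr⟩, rfl⟩, hF1 _, rfl⟩ (ih _ ?_)
            have h2 : d (G.tgt (F ⟨v, hvr⟩)) < d v := hF2 ⟨v, hvr⟩
            omega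
    exact main (d v) v le_rfl

theorem arb_unique {V E I : Type*} [Fintype V] [Fintype E] [Fintype I]
    (G : Digraph' V E) (cyc : E → I)
    (hsurj : Function.Surjective cyc)
    (hdeg : ∀ (i : I) (v : V),
      ((∃ e, cyc e = i ∧ G.src e = v) ∨ (∃ e, cyc e = i ∧ G.tgt e = v)) →
      (∃! e, cyc e = i ∧ G.src e = v) ∧ (∃! e, cyc e = i ∧ G.tgt e = v))
    (hfib : ∀ (i : I) (v w : V),
      (∃ e, cyc e = i ∧ (G.src e = v ∨ G.tgt e = v)) →
      (∃ e, cyc e = i ∧ (G.src e = w ∨ G.tgt e = w)) →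
      Relation.ReflTransGen
        (fun a b => ∃ e, cyc e = i ∧ G.src e = a ∧ G.tgt e = b) v w)
    (hcount : Fintype.card V + Fintype.card I = Fintype.card E + 1)
    (r : V) (T T' : Set E) (hT : G.IsArb r T) (hT' : G.IsArb r T') : T = T' := by
  classical
  have perArb : ∀ S : Set E, G.IsArb r S → ∃ m : I → E,
      ∀ i, cyc (m i) = i ∧ m i ∉ S ∧ ∀ e, cyc e = i → e ∉ S → e = m i := by
    intro S hS
    set Sf : Finset E := Finset.univ.filter (· ∈ S) with hSf
    have hmemSf : ∀ e, e ∈ Sf ↔ e ∈ S := by intro e; simp [hSf]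
    have hinj : Set.InjOn G.src ↑Sf := by
      intro e1 h1 e2 h2 hss
      have h1' : e1 ∈ S := (hmemSf e1).1 h1
      have h2' : e2 ∈ S := (hmemSf e2).1 h2
      have hr : G.src e1 ≠ r := hS.2.1 e1 h1'
      obtain ⟨e0, _, hu⟩ := hS.1 (G.src e1) hr
      rw [hu e1 ⟨h1', rfl⟩, hu e2 ⟨h2', hss.symm⟩]
    have himg : Sf.image G.src = Finset.univ.erase r := by
      ext v
      simp only [Finset.mem_image, Finset.mem_erase, Finset.mem_univ, and_true]
      constructor
      · rintro ⟨e, he, rfl⟩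
        exact hS.2.1 e ((hmemSf e).1 he)
      · intro hv
        obtain ⟨e, ⟨heS, hes⟩, -⟩ := hS.1 v hv
        exact ⟨e, (hmemSf e).2 heS, hes⟩
    have hcard : Sf.card = Fintype.card V - 1 := by
      rw [← Finset.card_image_of_injOn hinj, himg,
        Finset.card_erase_of_mem (Finset.mem_univ r), Finset.card_univ]
    have hVpos : 1 ≤ Fintype.card V := Fintype.card_pos_iff.mpr ⟨r⟩
    have hcompl : Sfᶜ.card = Fintype.card I := by
      rw [Finset.card_compl, hcard]
      omega
    have hsum : ∑ i, (Sfᶜ.filter (fun e => cyc e = i)).card = Fintype.card I := by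
      rw [← hcompl]
      exact (Finset.card_eq_sum_card_fiberwise (fun e _ => Finset.mem_univ (cyc e))).symm
    have hne : ∀ i, (Sfᶜ.filter (fun e => cyc e = i)).Nonempty := by
      intro i
      by_contra h
      have hall : ∀ e, cyc e = i → e ∈ S := by
        intro e he
        by_contra heS
        exact h ⟨e, Finset.mem_filter.2
          ⟨Finset.mem_compl.2 (fun hc => heS ((hmemSf e).1 hc)), he⟩⟩
      obtain ⟨e0, he0⟩ := hsurj i
      have key : ∀ v, Relation.ReflTransGen (fun a b => ∃ e ∈ S, G.src e = a ∧ G.tgt e = b) v r →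
          (∃ e, cyc e = i ∧ G.src e = v) → False := by
        intro v hv
        induction hv using Relation.ReflTransGen.head_induction_on with
        | refl =>
            rintro ⟨e, hei, her⟩
            exact hS.2.1 e (hall e hei) her
        | @head a c hstep hrest ih =>
            rintro ⟨e, hei, hea⟩
            obtain ⟨e', he'S, he'a, he'c⟩ := hstep
            have haR : a ≠ r := by rw [← hea]; exact hS.2.1 e (hall e hei)
            obtain ⟨e₀, -, hu⟩ := hS.1 a haR
            have hee : e' = e := by rw [hu e' ⟨he'S, he'a⟩, hu e ⟨hall e hei, hea⟩]
            apply ih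
            have hcin : G.tgt e = c := by rw [← hee]; exact he'c
            obtain ⟨⟨e2, he2, -⟩, -⟩ := hdeg i c (Or.inr ⟨e, hei, hcin⟩)
            exact ⟨e2, he2⟩
      exact key (G.src e0) (hS.2.2 _) ⟨e0, he0, rfl⟩
    have hone : ∀ i, (Sfᶜ.filter (fun e => cyc e = i)).card = 1 := by
      by_contra h
      push_neg at h
      obtain ⟨i0, hi0⟩ := h
      have h1 : ∀ i, 1 ≤ (Sfᶜ.filter (fun e => cyc e = i)).card := fun i => (hne i).card_pos
      have hlt : ∑ _i : I, 1 < ∑ i, (Sfᶜ.filter (fun e => cyc e = i)).card :=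
        Finset.sum_lt_sum (fun i _ => h1 i) ⟨i0, Finset.mem_univ i0, by have := h1 i0; omega⟩
      rw [Finset.sum_const, smul_eq_mul, mul_one, Finset.card_univ, hsum] at hlt
      exact lt_irrefl _ hlt
    choose m hm using fun i => Finset.card_eq_one.mp (hone i)
    refine ⟨m, fun i => ?_⟩
    have hmi : m i ∈ Sfᶜ.filter (fun e => cyc e = i) := by
      rw [hm i]; exact Finset.mem_singleton_self _
    obtain ⟨hc, hcyc⟩ := Finset.mem_filter.1 hmi
    refine ⟨hcyc, fun hmem => (Finset.mem_compl.1 hc) ((hmemSf _).2 hmem), ?_⟩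
    intro e hei heS
    have hmem4 : e ∈ Sfᶜ.filter (fun e => cyc e = i) :=
      Finset.mem_filter.2 ⟨Finset.mem_compl.2 (fun hc2 => heS ((hmemSf e).1 hc2)), hei⟩
    rw [hm i] at hmem4
    exact Finset.mem_singleton.1 hmem4
  obtain ⟨m, hm⟩ := perArb T hT
  obtain ⟨m', hm'⟩ := perArb T' hT'
  have hTm : ∀ e, e ∈ T ↔ e ≠ m (cyc e) := by
    intro e
    constructor
    · intro heT he
      exact (hm (cyc e)).2.1 (he ▸ heT)
    · intro hne2
      by_contra heT
      exact hne2 ((hm (cyc e)).2.2 e rfl heT)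
  have hTm' : ∀ e, e ∈ T' ↔ e ≠ m' (cyc e) := by
    intro e
    constructor
    · intro heT he
      exact (hm' (cyc e)).2.1 (he ▸ heT)
    · intro hne2
      by_contra heT
      exact hne2 ((hm' (cyc e)).2.2 e rfl heT)
  suffices hmm : m = m' by
    ext e; rw [hTm e, hTm' e, hmm]
  have hmem2 : ∀ v, ∃ n, v ∈ lev (fun a b => ∃ e ∈ T, G.src e = a ∧ G.tgt e = b) r n :=
    fun v => JoinCycAux.mem_lev_of_reach (hT.2.2 v)
  set d : V → ℕ := fun v => Nat.find (hmem2 v) with hd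
  have hdstep : ∀ a b, (∃ e ∈ T, G.src e = a ∧ G.tgt e = b) → d b < d a := by
    rintro a b ⟨e, heT, hsrc, htgt⟩
    have haR : a ≠ r := by rw [← hsrc]; exact hT.2.1 e heT
    have h1 : a ∈ lev (fun a b => ∃ e ∈ T, G.src e = a ∧ G.tgt e = b) r (d a) :=
      Nat.find_spec (hmem2 a)
    have h0 : d a ≠ 0 := by
      intro h; rw [h, JoinCycAux.lev_zero] at h1; exact haR h1
    obtain ⟨n, hn⟩ := Nat.exists_eq_succ_of_ne_zero h0
    rw [hn, JoinCycAux.lev_succ] at h1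
    rcases h1 with h1 | ⟨w, ⟨e', he'T, he's, he't⟩, hw⟩
    · exact absurd h1 (Nat.find_min (hmem2 a) (show n < d a by omega))
    · obtain ⟨e₀, -, hu⟩ := hT.1 a haR
      have hee : e' = e := by rw [hu e' ⟨he'T, he's⟩, hu e ⟨heT, hsrc⟩]
      have hb : b ∈ lev (fun a b => ∃ e ∈ T, G.src e = a ∧ G.tgt e = b) r n := by
        rw [← htgt, ← hee, he't]; exact hw
      have h2 : d b ≤ n := Nat.find_min' (hmem2 b) hb
      omega
  have hdtrans : ∀ a b, Relation.TransGen (fun a b => ∃ e ∈ T, G.src e = a ∧ G.tgt e = b) a b →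
      d b < d a := by
    intro a b h
    induction h with
    | single h => exact hdstep _ _ h
    | tail h1 h2 ih => exact lt_trans (hdstep _ _ h2) ih
  have hK4 : ∀ (i : I) (v : V), (∃ e, cyc e = i ∧ G.src e = v) → v ≠ G.src (m i) →
      Relation.TransGen (fun a b => ∃ e ∈ T, G.src e = a ∧ G.tgt e = b) v (G.src (m i)) := by
    rintro i v ⟨e, hei, hev⟩ hne2
    have hpath := hfib i v (G.src (m i)) ⟨e, hei, Or.inl hev⟩ ⟨m i, (hm i).1, Or.inl rfl⟩
    have conv : ∀ w, Relation.ReflTransGen (fun a b => ∃ e, cyc e = i ∧ G.src e = a ∧ G.tgt e = b)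
          w (G.src (m i)) →
        Relation.ReflTransGen (fun a b => ∃ e ∈ T, G.src e = a ∧ G.tgt e = b) w (G.src (m i)) := by
      intro w hw
      induction hw using Relation.ReflTransGen.head_induction_on with
      | refl => exact Relation.ReflTransGen.refl
      | @head a c hstep hrest ih =>
          obtain ⟨e', he'i, he'a, he'c⟩ := hstep
          by_cases hau : a = G.src (m i)
          · rw [hau]
          · have hne3 : e' ≠ m i := by
              intro h
              exact hau (by rw [← he'a, h])
            have he'T : e' ∈ T := by
              by_contra hbad
              exact hne3 ((hm i).2.2 e' he'i hbad)
            exact Relation.ReflTransGen.head ⟨e', he'T, he'a, he'c⟩ ih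
    rcases Relation.ReflTransGen.cases_head (conv v hpath) with h | ⟨c, hc, hcr⟩
    · exact absurd h hne2
    · exact Relation.TransGen.head' hc hcr
  by_contra hnemm
  set D : Finset I := Finset.univ.filter (fun i => m i ≠ m' i) with hD
  have hDne : D.Nonempty := by
    by_contra h
    apply hnemm
    funext i
    by_contra hi
    exact h ⟨i, Finset.mem_filter.2 ⟨Finset.mem_univ i, hi⟩⟩
  obtain ⟨i, hiD, hmax⟩ := D.exists_max_image (fun i => d (G.src (m i))) hDne
  have himm' : m i ≠ m' i := (Finset.mem_filter.1 hiD).2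
  have hne_uv : G.src (m i) ≠ G.src (m' i) := by
    intro h
    apply himm'
    have hout := (hdeg i (G.src (m i)) (Or.inl ⟨m i, (hm i).1, rfl⟩)).1
    exact hout.unique ⟨(hm i).1, rfl⟩ ⟨(hm' i).1, h.symm⟩
  have hvr : G.src (m' i) ≠ r := by
    intro h
    have hnotT : m' i ∉ T := fun hmem3 => hT.2.1 _ hmem3 h
    have h2 : m' i = m i := (hm i).2.2 (m' i) (hm' i).1 hnotT
    exact hne_uv (by rw [h2])
  obtain ⟨ev, ⟨hevT', hevsrc⟩, hevuniq⟩ := hT'.1 (G.src (m' i)) hvr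
  have hji : cyc ev ≠ i := by
    intro h
    have hout := (hdeg i (G.src (m' i)) (Or.inl ⟨m' i, (hm' i).1, rfl⟩)).1
    have h2 : ev = m' i := hout.unique ⟨h, hevsrc⟩ ⟨(hm' i).1, rfl⟩
    exact (hm' i).2.1 (h2 ▸ hevT')
  have hmj'v : G.src (m' (cyc ev)) ≠ G.src (m' i) := by
    intro h
    have hout := (hdeg (cyc ev) (G.src (m' i)) (Or.inl ⟨ev, rfl, hevsrc⟩)).1
    have h2 : ev = m' (cyc ev) := hout.unique ⟨rfl, hevsrc⟩ ⟨(hm' (cyc ev)).1, h⟩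
    exact (hm' (cyc ev)).2.1 (h2 ▸ hevT')
  have hmjv : G.src (m (cyc ev)) = G.src (m' i) := by
    by_contra h
    have hiT : m' i ∈ T := by
      rw [hTm (m' i), (hm' i).1]
      intro hbad
      exact hne_uv (by rw [hbad])
    have hevT : ev ∈ T := by
      rw [hTm ev]
      intro hbad
      exact h (by rw [← hbad, hevsrc])
    obtain ⟨e₀, -, hu⟩ := hT.1 (G.src (m' i)) hvr
    have h1 : m' i = e₀ := hu _ ⟨hiT, rfl⟩
    have h2 : ev = e₀ := hu _ ⟨hevT, hevsrc⟩
    exact hji (by rw [h2, ← h1, (hm' i).1])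
  have hjD : cyc ev ∈ D := Finset.mem_filter.2 ⟨Finset.mem_univ _,
    fun hbad => hmj'v (by rw [← hbad]; exact hmjv)⟩
  have hvout_i : ∃ e, cyc e = i ∧ G.src e = G.src (m' i) := ⟨m' i, (hm' i).1, rfl⟩
  have htg := hK4 i (G.src (m' i)) hvout_i (Ne.symm hne_uv)
  have hlt : d (G.src (m i)) < d (G.src (m' i)) := hdtrans _ _ htg
  have hle := hmax (cyc ev) hjD
  rw [hmjv] at hle
  omega

end JoinCycAux

/-- A finite connected directed graph which is a join of chains (a bouquet of
consistently oriented circles) has exactly one arborescence rooted at any vertex.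
The bouquet structure is encoded by a partition `cyc : E → I` of the edges into
directed cycles (each fiber is a directed cycle: every incident vertex has exactly one
outgoing and one incoming fiber edge, and the fiber is connected), together with the
Euler count `|V| + |I| = |E| + 1` forcing the cycles to be glued at single cut
vertices in a tree pattern. -/
theorem join_of_cycles_unique_arborescence {V E I : Type*}
    [Fintype V] [Fintype E] [Fintype I]
    (G : Digraph' V E) (cyc : E → I)
    (hsurj : Function.Surjective cyc)
    (hdeg : ∀ (i : I) (v : V),
      ((∃ e, cyc e = i ∧ G.src e = v) ∨ (∃ e, cyc e = i ∧ G.tgt e = v)) →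
      (∃! e, cyc e = i ∧ G.src e = v) ∧ (∃! e, cyc e = i ∧ G.tgt e = v))
    (hfib : ∀ (i : I) (v w : V),
      (∃ e, cyc e = i ∧ (G.src e = v ∨ G.tgt e = v)) →
      (∃ e, cyc e = i ∧ (G.src e = w ∨ G.tgt e = w)) →
      Relation.ReflTransGen
        (fun a b => ∃ e, cyc e = i ∧ G.src e = a ∧ G.tgt e = b) v w)
    (hconn : ∀ v w : V,
      Relation.ReflTransGen
        (fun a b => ∃ e, (G.src e = a ∧ G.tgt e = b) ∨ (G.src e = b ∧ G.tgt e = a)) v w)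
    (hcount : Fintype.card V + Fintype.card I = Fintype.card E + 1) :
    ∀ r : V, Nat.card {T : Set E // G.IsArb r T} = 1 := by
  intro r
  classical
  have hstep_dir : ∀ a b : V,
      (∃ e, (G.src e = a ∧ G.tgt e = b) ∨ (G.src e = b ∧ G.tgt e = a)) →
      Relation.ReflTransGen (fun a b => ∃ e, G.src e = a ∧ G.tgt e = b) a b := by
    rintro a b ⟨e, h | h⟩
    · exact Relation.ReflTransGen.single ⟨e, h⟩
    · have hp := hfib (cyc e) a b ⟨e, rfl, Or.inr h.2⟩ ⟨e, rfl, Or.inl h.1⟩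
      exact Relation.ReflTransGen.mono (fun x y hxy => by
        obtain ⟨e', -, hs, ht⟩ := hxy; exact ⟨e', hs, ht⟩) a b hp
  have hreach : ∀ v, Relation.ReflTransGen (fun a b => ∃ e, G.src e = a ∧ G.tgt e = b) v r := by
    intro v
    have h := hconn v r
    induction h with
    | refl => exact Relation.ReflTransGen.refl
    | tail h1 h2 ih => exact ih.trans (hstep_dir _ _ h2)
  obtain ⟨T₀, hT₀⟩ := JoinCycAux.exists_arb G r hreach
  rw [Nat.card_eq_one_iff_unique]
  exact ⟨⟨fun a b => Subtype.ext
    (JoinCycAux.arb_unique G cyc hsurj hdeg hfib hcount r a.1 b.1 a.2 b.2)⟩, ⟨⟨T₀, hT₀⟩⟩⟩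
end
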